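/- arXiv:1907.11755 — 6 statements merged into one kernel-verified Lean document; each statement's English description precedes it below -/
import Mathlib

section
/- Let Δ⁺ be the positive roots of a semisimple Lie algebra and β_π its Kostant cascade (the maximal set of strongly orthogonal positive roots obtained by iteratively taking highest roots of orthogonal complements). For each β in β_π let H_β = {α ∈ Δ_K : (α, β) > 0} where Δ_K is the irreducible subsystem with highest root β. Then Δ⁺ is the disjoint union of the sets H_β over β ∈ β_π. -/
/- Kostant cascade machinery for a root system in a real inner product space. -/

open scoped RealInnerProductSpace

variable {V : Type*} [NormedAddCommGroup V] [InnerProductSpace ℝ V]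

/-- Two roots of `Rs` are linked if they are not orthogonal. -/
def Linked (Rs : Set V) (a b : V) : Prop := a ∈ Rs ∧ b ∈ Rs ∧ ⟪a, b⟫ ≠ 0

/-- `C` is an irreducible component of the root subsystem `Rs` :
it is a connectedness class of the non-orthogonality relation. -/
def IsComponent (Rs : Set V) (C : Set V) : Prop :=
  ∃ a ∈ Rs, C = {b | Relation.ReflTransGen (Linked Rs) a b}

/-- `β` is the highest root of the (irreducible) subsystem `C` of `Rs`
with respect to the positive system `pos`. -/
def IsHighestRoot (Rs pos C : Set V) (β : V) : Prop :=
  β ∈ C ∧ β ∈ pos ∧ ∀ α ∈ C, α ∈ pos → β + α ∉ Rs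

/-- The subsystems occurring in the recursive construction of the Kostant cascade:
irreducible components of `Rs`, and recursively irreducible components of the
orthogonal complement of the highest root of a cascade subsystem. -/
inductive CascadeSub (Rs pos : Set V) : Set V → Prop
  | base (C : Set V) : IsComponent Rs C → CascadeSub Rs pos C
  | step (K C : Set V) (β : V) : CascadeSub Rs pos K → IsHighestRoot Rs pos K β →
      IsComponent {α ∈ K | ⟪α, β⟫ = 0} C → CascadeSub Rs pos C

/-- The Kostant cascade `β_π` : the highest roots of the cascade subsystems. -/
def cascadeSet (Rs pos : Set V) : Set V :=
  {β | ∃ K, CascadeSub Rs pos K ∧ IsHighestRoot Rs pos K β}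

/-- `H_β = {α ∈ Δ_K : (α, β) > 0}` where `Δ_K` is the cascade subsystem with
highest root `β`. -/
def cascadeH (Rs pos : Set V) (β : V) : Set V :=
  {α | ∃ K, CascadeSub Rs pos K ∧ IsHighestRoot Rs pos K β ∧ α ∈ K ∧ 0 < ⟪α, β⟫}

/-- `Rs` is a (reduced, crystallographic) root system, as the set of roots of a
semisimple Lie algebra. -/
structure IsRootSystem (Rs : Set V) : Prop where
  finite : Rs.Finite
  ne_zero : (0 : V) ∉ Rs
  neg_mem : ∀ α ∈ Rs, -α ∈ Rs
  reduced : ∀ α ∈ Rs, ∀ t : ℝ, t • α ∈ Rs → t = 1 ∨ t = -1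
  crystallographic : ∀ α ∈ Rs, ∀ β ∈ Rs, ∃ z : ℤ, 2 * ⟪β, α⟫ / ⟪α, α⟫ = (z : ℝ)
  reflect_mem : ∀ α ∈ Rs, ∀ β ∈ Rs, β - (2 * ⟪β, α⟫ / ⟪α, α⟫) • α ∈ Rs

/-- `pos` is a system of positive roots for `Rs`. -/
structure IsPositiveSystem (Rs pos : Set V) : Prop where
  subset : pos ⊆ Rs
  pos_iff : ∀ α ∈ Rs, (α ∈ pos ↔ -α ∉ pos)
  add_mem : ∀ α ∈ pos, ∀ β ∈ pos, α + β ∈ Rs → α + β ∈ pos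

/-!
Every cascade subsystem `K` is an irreducible closed subsystem of the root system. Such a `K` has
a highest root `θ`: climbing from a positive root by adding positive roots must stop, since no
nonempty sum of positive roots vanishes. It is unique: two highest roots would be orthogonal and
no root could meet both, whereas connectedness of `K` produces one that does. Every positive root
`α` of `K` has `⟪α, θ⟫ ≥ 0`; if `⟪α, θ⟫ > 0` then `α ∈ H_θ`, otherwise `α` lies in a strictly
smaller cascade subsystem inside `θ^⊥`, which gives the covering by induction. Cascade subsystems
form a forest in which intersecting members are comparable and proper descendants of `K` lie in
`θ^⊥`, so no root lies in two of the sets `H_β`.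
-/

namespace IsRootSystem

variable {Rs : Set V} (hRS : IsRootSystem Rs)
include hRS

theorem inner_self_pos {a : V} (ha : a ∈ Rs) : 0 < ⟪a, a⟫ :=
  real_inner_self_pos.2 fun h => hRS.ne_zero (h ▸ ha)

theorem add_mem_of_inner_neg {a b : V} (ha : a ∈ Rs) (hb : b ∈ Rs) (hab : ⟪a, b⟫ < 0)
    (hne : a ≠ -b) : a + b ∈ Rs := by
  obtain ⟨n, hn⟩ := hRS.crystallographic a ha b hb
  obtain ⟨m, hm⟩ := hRS.crystallographic b hb a ha
  by_cases hn1 : n = -1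
  · convert hRS.reflect_mem a ha b hb using 1
    rw [hn, hn1]
    simp [add_comm]
  by_cases hm1 : m = -1
  · convert hRS.reflect_mem b hb a ha using 1
    rw [hm, hm1]
    simp
  have hA := hRS.inner_self_pos ha
  have hB := hRS.inner_self_pos hb
  rw [real_inner_comm] at hn
  have hn0 : (n : ℝ) < 0 := hn ▸ div_neg_of_neg_of_pos (by linarith) hA
  have hm0 : (m : ℝ) < 0 := hm ▸ div_neg_of_neg_of_pos (by linarith) hB
  -- Cauchy–Schwarz bounds the product of the two Cartan integers by 4
  have hnm : (n : ℝ) * m ≤ 4 := by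
    rw [← hn, ← hm, div_mul_div_comm, div_le_iff₀ (by positivity)]
    nlinarith [real_inner_mul_inner_self_le a b]
  obtain ⟨rfl, rfl⟩ : n = -2 ∧ m = -2 := by
    have : n < 0 := by exact_mod_cast hn0
    have : m < 0 := by exact_mod_cast hm0
    have : n * m ≤ 4 := by exact_mod_cast hnm
    have : n ≤ -2 := by omega
    have : m ≤ -2 := by omega
    constructor <;> nlinarith
  have h1 : ⟪a, b⟫ = -⟪a, a⟫ := by rw [div_eq_iff hA.ne'] at hn; push_cast at hn; linarith
  have h2 : ⟪a, b⟫ = -⟪b, b⟫ := by rw [div_eq_iff hB.ne'] at hm; push_cast at hm; linarith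
  have : ⟪a + b, a + b⟫ = 0 := by
    rw [real_inner_add_add_self]; linarith
  exact absurd (eq_neg_of_add_eq_zero_left (inner_self_eq_zero.mp this)) hne

theorem sub_mem_of_inner_pos {a b : V} (ha : a ∈ Rs) (hb : b ∈ Rs) (hab : 0 < ⟪a, b⟫)
    (hne : a ≠ b) : a - b ∈ Rs := by
  rw [sub_eq_add_neg]
  exact hRS.add_mem_of_inner_neg ha (hRS.neg_mem b hb) (by rwa [inner_neg_right, neg_lt_zero])
    (by rwa [neg_neg])

end IsRootSystem

namespace IsPositiveSystem

variable {Rs pos : Set V} (hpos : IsPositiveSystem Rs pos)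
include hpos

omit [InnerProductSpace ℝ V] in
theorem mem_or_neg_mem {x : V} (hx : x ∈ Rs) : x ∈ pos ∨ -x ∈ pos := by
  by_contra! h
  exact h.1 ((hpos.pos_iff x hx).2 h.2)

omit [InnerProductSpace ℝ V] in
theorem neg_notMem {x : V} (hx : x ∈ pos) : -x ∉ pos :=
  (hpos.pos_iff x (hpos.subset hx)).1 hx

omit [InnerProductSpace ℝ V] in
theorem ne_neg {x y : V} (hx : x ∈ pos) (hy : y ∈ pos) : x ≠ -y := by
  rintro rfl
  exact hpos.neg_notMem hy hx

theorem add_mem_of_inner_neg (hRS : IsRootSystem Rs) {a b : V} (ha : a ∈ pos) (hb : b ∈ pos)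
    (hab : ⟪a, b⟫ < 0) : a + b ∈ pos :=
  hpos.add_mem a ha b hb <|
    hRS.add_mem_of_inner_neg (hpos.subset ha) (hpos.subset hb) hab (hpos.ne_neg ha hb)

/-- If `a + r.sum = 0` then `⟪a, r.sum⟫ < 0`, so some `b ∈ r` has `⟪a, b⟫ < 0`; merging `a` and `b`
into the positive root `a + b` shortens the multiset without changing its sum. -/
theorem multiset_sum_ne_zero (hRS : IsRootSystem Rs) {s : Multiset V} (hs : ∀ x ∈ s, x ∈ pos)
    (hs0 : s ≠ 0) : s.sum ≠ 0 := by
  induction hn : Multiset.card s using Nat.strong_induction_on generalizing s with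
  | _ n ih =>
  obtain ⟨a, has⟩ := Multiset.exists_mem_of_ne_zero hs0
  obtain ⟨r, rfl⟩ := Multiset.exists_cons_of_mem has
  intro hsum
  have ha : a ∈ pos := hs a has
  obtain ⟨b, hbr, hab⟩ : ∃ b ∈ r, ⟪a, b⟫ < 0 := by
    by_contra! h
    have : 0 ≤ ⟪a, r.sum⟫ := by
      rw [← innerₛₗ_apply_apply (𝕜 := ℝ), map_multiset_sum]
      exact Multiset.sum_nonneg fun x hx => by
        obtain ⟨b, hb, rfl⟩ := Multiset.mem_map.1 hx
        exact h b hb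
    rw [Multiset.sum_cons] at hsum
    rw [eq_neg_of_add_eq_zero_right hsum, inner_neg_right] at this
    linarith [hRS.inner_self_pos (hpos.subset ha)]
  obtain ⟨r', rfl⟩ := Multiset.exists_cons_of_mem hbr
  have hb : b ∈ pos := hs b (Multiset.mem_cons_of_mem (Multiset.mem_cons_self b r'))
  have hlt : Multiset.card ((a + b) ::ₘ r') < n := by simp [← hn]
  have hs' : ∀ x ∈ (a + b) ::ₘ r', x ∈ pos := by
    simp only [Multiset.mem_cons, forall_eq_or_imp] at hs ⊢
    exact ⟨hpos.add_mem_of_inner_neg hRS ha hb hab, hs.2.2⟩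
  exact ih _ hlt hs' Multiset.cons_ne_zero rfl (by simpa [add_assoc] using hsum)

end IsPositiveSystem

structure IsClosedSubsystem (Rs K : Set V) : Prop where
  subset : K ⊆ Rs
  neg_mem : ∀ x ∈ K, -x ∈ K
  add_mem : ∀ x ∈ K, ∀ y ∈ K, x + y ∈ Rs → x + y ∈ K

structure IsIrreducibleClosedSubsystem (Rs K : Set V) : Prop extends IsClosedSubsystem Rs K where
  connected : ∀ x ∈ K, ∀ y ∈ K, Relation.ReflTransGen (Linked K) x y

theorem IsRootSystem.isClosedSubsystem {Rs : Set V} (hRS : IsRootSystem Rs) :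
    IsClosedSubsystem Rs Rs :=
  ⟨subset_rfl, hRS.neg_mem, fun _ _ _ _ h => h⟩

namespace IsClosedSubsystem

variable {Rs K : Set V}

omit [InnerProductSpace ℝ V] in
theorem sub_mem (hK : IsClosedSubsystem Rs K) {x y : V} (hx : x ∈ K) (hy : y ∈ K)
    (hxy : x - y ∈ Rs) : x - y ∈ K := by
  rw [sub_eq_add_neg] at hxy ⊢
  exact hK.add_mem x hx (-y) (hK.neg_mem y hy) hxy

theorem inter_orthogonal (hK : IsClosedSubsystem Rs K) (t : V) :
    IsClosedSubsystem Rs {α ∈ K | ⟪α, t⟫ = 0} where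
  subset _ hx := hK.subset hx.1
  neg_mem x hx := ⟨hK.neg_mem x hx.1, by rw [inner_neg_left, hx.2, neg_zero]⟩
  add_mem x hx y hy h := ⟨hK.add_mem x hx.1 y hy.1 h, by rw [inner_add_left, hx.2, hy.2, add_zero]⟩

end IsClosedSubsystem

def Exceeds (pos : Set V) (x y : V) : Prop :=
  ∃ s : Multiset V, s ≠ 0 ∧ (∀ b ∈ s, b ∈ pos) ∧ x = y + s.sum

theorem isStrictOrder_exceeds {Rs pos : Set V} (hRS : IsRootSystem Rs)
    (hpos : IsPositiveSystem Rs pos) : IsStrictOrder V (Exceeds pos) where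
  irrefl x := by
    rintro ⟨s, hs0, hs, hx⟩
    exact hpos.multiset_sum_ne_zero hRS hs hs0 (by simpa using hx)
  trans x y z := by
    rintro ⟨s, hs0, hs, rfl⟩ ⟨t, -, ht, rfl⟩
    refine ⟨t + s, by simp [hs0], fun b hb => ?_, by rw [Multiset.sum_add, add_assoc]⟩
    rcases Multiset.mem_add.1 hb with hb | hb
    exacts [ht b hb, hs b hb]

section HighestRoot

variable {Rs pos K : Set V}

theorem IsClosedSubsystem.exists_isHighestRoot (hK : IsClosedSubsystem Rs K)
    (hRS : IsRootSystem Rs) (hpos : IsPositiveSystem Rs pos) {α : V} (hα : α ∈ K) :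
    ∃ θ, IsHighestRoot Rs pos K θ := by
  have := isStrictOrder_exceeds hRS hpos
  have hfin : (K ∩ pos).Finite := hRS.finite.subset (Set.inter_subset_left.trans hK.subset)
  obtain ⟨γ, hγ⟩ : (K ∩ pos).Nonempty := by
    rcases hpos.mem_or_neg_mem (hK.subset hα) with h | h
    exacts [⟨α, hα, h⟩, ⟨-α, hK.neg_mem α hα, h⟩]
  -- climb: a positive root of `K` that is not highest is exceeded by another one
  refine (hfin.wellFoundedOn (r := Exceeds pos)).induction hγ
    (P := fun _ => ∃ θ, IsHighestRoot Rs pos K θ) fun θ ⟨hθK, hθ⟩ ih => ?_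
  by_cases hmax : ∀ β ∈ K, β ∈ pos → θ + β ∉ Rs
  · exact ⟨θ, hθK, hθ, hmax⟩
  push Not at hmax
  obtain ⟨β, hβK, hβ, hθβ⟩ := hmax
  exact ih (θ + β) ⟨hK.add_mem θ hθK β hβK hθβ, hpos.add_mem θ hθ β hβ hθβ⟩
    ⟨{β}, Multiset.singleton_ne_zero β, by simpa using hβ, by simp⟩

variable {θ : V}

theorem IsHighestRoot.inner_nonneg (hθ : IsHighestRoot Rs pos K θ) (hRS : IsRootSystem Rs)
    (hpos : IsPositiveSystem Rs pos) (hKRs : K ⊆ Rs) {γ : V} (hγK : γ ∈ K) (hγ : γ ∈ pos) :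
    0 ≤ ⟪γ, θ⟫ := by
  by_contra! h
  have := hRS.add_mem_of_inner_neg (hKRs hγK) (hKRs hθ.1) h (hpos.ne_neg hγ hθ.2.1)
  exact hθ.2.2 γ hγK hγ (by rwa [add_comm])

theorem IsHighestRoot.sub_mem_pos (hθ : IsHighestRoot Rs pos K θ) (hRS : IsRootSystem Rs)
    (hpos : IsPositiveSystem Rs pos) (hK : IsClosedSubsystem Rs K) {α : V} (hαK : α ∈ K)
    (hα : 0 < ⟪α, θ⟫) (hne : α ≠ θ) : θ - α ∈ K ∧ θ - α ∈ pos := by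
  have hroot : α - θ ∈ Rs := hRS.sub_mem_of_inner_pos (hK.subset hαK) (hK.subset hθ.1) hα hne
  have hmem : α - θ ∈ K := hK.sub_mem hαK hθ.1 hroot
  refine ⟨by simpa using hK.neg_mem _ hmem, ?_⟩
  rcases hpos.mem_or_neg_mem hroot with h | h
  · exact absurd (by simpa using hK.subset hαK) (hθ.2.2 _ hmem h)
  · rwa [neg_sub] at h

/-- If `x` meets `t` and `v`, and `v` meets `w`, then `x`, `v` or `x ± v` meets both `t` and `w`;
so the roots meeting `t` are linked to every root reachable from `t`. -/
theorem IsIrreducibleClosedSubsystem.exists_inner_ne_zero_inner_ne_zero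
    (hK : IsIrreducibleClosedSubsystem Rs K) (hRS : IsRootSystem Rs) {t u : V} (ht : t ∈ K)
    (hu : u ∈ K) : ∃ x ∈ K, ⟪x, t⟫ ≠ 0 ∧ ⟪x, u⟫ ≠ 0 := by
  induction hK.connected t ht u hu with
  | refl =>
    have := (hRS.inner_self_pos (hK.subset ht)).ne'
    exact ⟨t, ht, this, this⟩
  | @tail v w _ hvw ih =>
    obtain ⟨hvK, hwK, hvw⟩ := hvw
    obtain ⟨x, hxK, hxt, hxv⟩ := ih hvK
    by_cases hxw : ⟪x, w⟫ ≠ 0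
    · exact ⟨x, hxK, hxt, hxw⟩
    by_cases hvt : ⟪v, t⟫ ≠ 0
    · exact ⟨v, hvK, hvt, hvw⟩
    push Not at hxw hvt
    obtain ⟨v', hv'K, hv't, hv'w, hxv'⟩ :
        ∃ v' ∈ K, ⟪v', t⟫ = 0 ∧ ⟪v', w⟫ ≠ 0 ∧ ⟪x, v'⟫ < 0 := by
      rcases hxv.lt_or_gt with h | h
      · exact ⟨v, hvK, hvt, hvw, h⟩
      · refine ⟨-v, hK.neg_mem v hvK, ?_, ?_, ?_⟩ <;> simpa [inner_neg_left, inner_neg_right]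
    have hne : x ≠ -v' := by
      rintro rfl
      simp [inner_neg_left, hv't] at hxt
    refine ⟨x + v', hK.add_mem x hxK v' hv'K
      (hRS.add_mem_of_inner_neg (hK.subset hxK) (hK.subset hv'K) hxv' hne), ?_, ?_⟩
    · rwa [inner_add_left, hv't, add_zero]
    · rwa [inner_add_left, hxw, zero_add]

theorem IsHighestRoot.eq {θ' : V} (hθ : IsHighestRoot Rs pos K θ)
    (hθ' : IsHighestRoot Rs pos K θ') (hRS : IsRootSystem Rs) (hpos : IsPositiveSystem Rs pos)
    (hK : IsIrreducibleClosedSubsystem Rs K) : θ = θ' := by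
  by_contra hne
  have hKc := hK.toIsClosedSubsystem
  have horth : ⟪θ, θ'⟫ = 0 := by
    by_contra h
    have hlt := (hθ'.inner_nonneg hRS hpos hK.subset hθ.1 hθ.2.1).lt_of_ne' h
    have h₁ := (hθ'.sub_mem_pos hRS hpos hKc hθ.1 hlt hne).2
    have h₂ := (hθ.sub_mem_pos hRS hpos hKc hθ'.1 (by rwa [real_inner_comm]) (Ne.symm hne)).2
    exact hpos.neg_notMem h₁ (by rwa [neg_sub])
  -- a positive root `α` meeting `θ` lies below `θ`, so `⟪α, θ'⟫ ≤ ⟪θ, θ'⟫ = 0`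
  have hsep : ∀ α ∈ K, α ∈ pos → ⟪α, θ⟫ ≠ 0 → ⟪α, θ'⟫ = 0 := by
    intro α hαK hα hαθ
    obtain rfl | hαne := eq_or_ne α θ
    · exact horth
    have hαθ' := (hθ.inner_nonneg hRS hpos hK.subset hαK hα).lt_of_ne' hαθ
    obtain ⟨hdK, hd⟩ := hθ.sub_mem_pos hRS hpos hKc hαK hαθ' hαne
    have := hθ'.inner_nonneg hRS hpos hK.subset hdK hd
    rw [inner_sub_left, horth] at this
    linarith [hθ'.inner_nonneg hRS hpos hK.subset hαK hα]
  obtain ⟨x, hxK, hxθ, hxθ'⟩ := hK.exists_inner_ne_zero_inner_ne_zero hRS hθ.1 hθ'.1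
  rcases hpos.mem_or_neg_mem (hK.subset hxK) with hx | hx
  · exact hxθ' (hsep x hxK hx hxθ)
  · have := hsep (-x) (hK.neg_mem x hxK) hx (by rwa [inner_neg_left, neg_ne_zero])
    exact hxθ' (by rwa [inner_neg_left, neg_eq_zero] at this)

end HighestRoot

instance (S : Set V) : Std.Symm (Linked S) :=
  ⟨fun _ _ ⟨ha, hb, hab⟩ => ⟨hb, ha, by rwa [real_inner_comm]⟩⟩

def component (S : Set V) (a : V) : Set V := {b | Relation.ReflTransGen (Linked S) a b}

theorem isComponent_component {S : Set V} {a : V} (ha : a ∈ S) :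
    IsComponent S (component S a) :=
  ⟨a, ha, rfl⟩

theorem mem_component_self (S : Set V) (a : V) : a ∈ component S a :=
  Relation.ReflTransGen.refl

namespace IsComponent

variable {S C C' : Set V}

theorem subset (hC : IsComponent S C) : C ⊆ S := by
  obtain ⟨a, ha, rfl⟩ := hC
  intro b hb
  rcases Relation.ReflTransGen.cases_tail hb with rfl | ⟨c, -, hcb⟩
  exacts [ha, hcb.2.1]

theorem eq_component (hC : IsComponent S C) {x : V} (hx : x ∈ C) : C = component S x := by
  obtain ⟨a, -, rfl⟩ := hC
  ext b
  exact ⟨fun hb => (symm hx).trans hb, fun hb => Relation.ReflTransGen.trans hx hb⟩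

theorem eq_of_mem (hC : IsComponent S C) (hC' : IsComponent S C') {x : V} (hx : x ∈ C)
    (hx' : x ∈ C') : C = C' :=
  (hC.eq_component hx).trans (hC'.eq_component hx').symm

theorem connected (hC : IsComponent S C) {x y : V} (hx : x ∈ C) (hy : y ∈ C) :
    Relation.ReflTransGen (Linked C) x y := by
  obtain ⟨a, -, rfl⟩ := hC
  have hpath : ∀ b ∈ component S a, Relation.ReflTransGen (Linked (component S a)) a b := by
    intro b hb
    induction hb with
    | refl => exact .refl
    | tail hac hcb ih => exact ih.tail ⟨hac, hac.tail hcb, hcb.2.2⟩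
  exact (symm (hpath x hx)).trans (hpath y hy)

/-- `x` is linked to `-x`, and `x + y` to `x` or `y`, since
`⟪x + y, x⟫ + ⟪x + y, y⟫ = ‖x + y‖² > 0`. -/
theorem isIrreducibleClosedSubsystem {Rs : Set V} (hC : IsComponent S C)
    (hRS : IsRootSystem Rs) (hS : IsClosedSubsystem Rs S) : IsIrreducibleClosedSubsystem Rs C where
  subset := hC.subset.trans hS.subset
  neg_mem x hx := by
    have hxS := hC.subset hx
    rw [hC.eq_component hx]
    refine .single ⟨hxS, hS.neg_mem x hxS, ?_⟩
    rw [inner_neg_right, neg_ne_zero]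
    exact (hRS.inner_self_pos (hS.subset hxS)).ne'
  add_mem x hx y hy hxy := by
    have hsum := hS.add_mem x (hC.subset hx) y (hC.subset hy) hxy
    have hnorm : 0 < ⟪x + y, x⟫ + ⟪x + y, y⟫ := by
      rw [← inner_add_right]
      exact hRS.inner_self_pos hxy
    by_cases hx' : ⟪x + y, x⟫ = 0
    · rw [hC.eq_component hy]
      exact .single ⟨hC.subset hy, hsum, by rw [real_inner_comm]; linarith⟩
    · rw [hC.eq_component hx]
      exact .single ⟨hC.subset hx, hsum, by rwa [real_inner_comm]⟩
  connected _ hx _ hy := hC.connected hx hy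

end IsComponent

def CascadeChild (Rs pos K C : Set V) : Prop :=
  ∃ θ, IsHighestRoot Rs pos K θ ∧ IsComponent {α ∈ K | ⟪α, θ⟫ = 0} C

section Cascade

open Relation

variable {Rs pos : Set V}

theorem CascadeSub.isIrreducibleClosedSubsystem (hRS : IsRootSystem Rs) {K : Set V}
    (hK : CascadeSub Rs pos K) : IsIrreducibleClosedSubsystem Rs K := by
  induction hK with
  | base C hC => exact hC.isIrreducibleClosedSubsystem hRS hRS.isClosedSubsystem
  | step K C θ _ _ hC ih =>
    exact hC.isIrreducibleClosedSubsystem hRS (ih.toIsClosedSubsystem.inter_orthogonal θ)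

theorem CascadeSub.exists_isComponent_reflTransGen {K : Set V} (hK : CascadeSub Rs pos K) :
    ∃ C, IsComponent Rs C ∧ ReflTransGen (CascadeChild Rs pos) C K := by
  induction hK with
  | base C hC => exact ⟨C, hC, .refl⟩
  | step K C θ _ hθ hC ih =>
    obtain ⟨C₀, hC₀, hd⟩ := ih
    exact ⟨C₀, hC₀, hd.tail ⟨θ, hθ, hC⟩⟩

theorem subset_of_reflTransGen_cascadeChild {K L : Set V}
    (h : ReflTransGen (CascadeChild Rs pos) K L) : L ⊆ K := by
  induction h with
  | refl => exact subset_rfl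
  | tail _ hchild ih =>
    obtain ⟨θ, -, hC⟩ := hchild
    exact fun x hx => ih (hC.subset hx).1

theorem reflTransGen_cascadeChild_total (hRS : IsRootSystem Rs) (hpos : IsPositiveSystem Rs pos)
    {A K₁ K₂ : Set V} (hA : CascadeSub Rs pos A) (h₁ : ReflTransGen (CascadeChild Rs pos) A K₁)
    (h₂ : ReflTransGen (CascadeChild Rs pos) A K₂) (hmeet : (K₁ ∩ K₂).Nonempty) :
    ReflTransGen (CascadeChild Rs pos) K₁ K₂ ∨ ReflTransGen (CascadeChild Rs pos) K₂ K₁ := by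
  induction h₁ using ReflTransGen.head_induction_on generalizing K₂ with
  | refl => exact Or.inl h₂
  | head hchild hrest ih =>
    rcases h₂.cases_head with rfl | ⟨C₂, ⟨θ₂, hθ₂, hC₂⟩, hrest₂⟩
    · exact Or.inr (.head hchild hrest)
    -- both paths leave `A` through the same highest root and then the same component
    obtain ⟨θ, hθ, hC⟩ := hchild
    obtain rfl := hθ.eq hθ₂ hRS hpos (hA.isIrreducibleClosedSubsystem hRS)
    obtain ⟨x, hx₁, hx₂⟩ := hmeet
    obtain rfl := hC.eq_of_mem hC₂ (subset_of_reflTransGen_cascadeChild hrest hx₁)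
      (subset_of_reflTransGen_cascadeChild hrest₂ hx₂)
    exact ih (.step _ _ θ hA hθ hC) hrest₂ ⟨x, hx₁, hx₂⟩

theorem CascadeSub.reflTransGen_total (hRS : IsRootSystem Rs) (hpos : IsPositiveSystem Rs pos)
    {K₁ K₂ : Set V} (h₁ : CascadeSub Rs pos K₁) (h₂ : CascadeSub Rs pos K₂)
    (hmeet : (K₁ ∩ K₂).Nonempty) :
    ReflTransGen (CascadeChild Rs pos) K₁ K₂ ∨ ReflTransGen (CascadeChild Rs pos) K₂ K₁ := by
  obtain ⟨C₁, hC₁, hd₁⟩ := h₁.exists_isComponent_reflTransGen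
  obtain ⟨C₂, hC₂, hd₂⟩ := h₂.exists_isComponent_reflTransGen
  obtain ⟨x, hx₁, hx₂⟩ := hmeet
  obtain rfl := hC₁.eq_of_mem hC₂ (subset_of_reflTransGen_cascadeChild hd₁ hx₁)
    (subset_of_reflTransGen_cascadeChild hd₂ hx₂)
  exact reflTransGen_cascadeChild_total hRS hpos (.base _ hC₁) hd₁ hd₂ ⟨x, hx₁, hx₂⟩

theorem IsHighestRoot.eq_or_forall_inner_eq_zero {K L : Set V} {θ θ' : V}
    (hθ : IsHighestRoot Rs pos K θ) (hRS : IsRootSystem Rs) (hpos : IsPositiveSystem Rs pos)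
    (hK : IsIrreducibleClosedSubsystem Rs K) (hθ' : IsHighestRoot Rs pos L θ')
    (h : ReflTransGen (CascadeChild Rs pos) K L) : θ' = θ ∨ ∀ α ∈ L, ⟪α, θ⟫ = 0 := by
  rcases h.cases_head with rfl | ⟨C, ⟨η, hη, hC⟩, hCL⟩
  · exact Or.inl (hθ'.eq hθ hRS hpos hK)
  obtain rfl := hη.eq hθ hRS hpos hK
  exact Or.inr fun α hα => (hC.subset (subset_of_reflTransGen_cascadeChild hCL hα)).2

theorem CascadeSub.mem_biUnion_cascadeH {K : Set V} (hK : CascadeSub Rs pos K)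
    (hRS : IsRootSystem Rs) (hpos : IsPositiveSystem Rs pos) {α : V} (hαK : α ∈ K)
    (hα : α ∈ pos) : α ∈ ⋃ β ∈ cascadeSet Rs pos, cascadeH Rs pos β := by
  induction hn : K.ncard using Nat.strong_induction_on generalizing K with
  | _ n ih =>
  have hKirr := hK.isIrreducibleClosedSubsystem hRS
  obtain ⟨θ, hθ⟩ := hKirr.exists_isHighestRoot hRS hpos hαK
  rcases (hθ.inner_nonneg hRS hpos hKirr.subset hαK hα).eq_or_lt with h | h
  · have hαS : α ∈ {γ ∈ K | ⟪γ, θ⟫ = 0} := ⟨hαK, h.symm⟩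
    have hC := isComponent_component hαS
    refine ih _ ?_ (.step K _ θ hK hθ hC) (mem_component_self _ α) rfl
    rw [← hn]
    refine Set.ncard_lt_ncard ⟨fun x hx => (hC.subset hx).1, fun hKC => ?_⟩
      (hRS.finite.subset hKirr.subset)
    exact (hRS.inner_self_pos (hKirr.subset hθ.1)).ne' (hC.subset (hKC hθ.1)).2
  · exact Set.mem_biUnion ⟨K, hK, hθ⟩ ⟨K, hK, hθ, hαK, h⟩

theorem pos_subset_biUnion_cascadeH (hRS : IsRootSystem Rs) (hpos : IsPositiveSystem Rs pos) :
    pos ⊆ ⋃ β ∈ cascadeSet Rs pos, cascadeH Rs pos β := fun α hα =>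
  (CascadeSub.base _ (isComponent_component (hpos.subset hα))).mem_biUnion_cascadeH hRS hpos
    (mem_component_self Rs α) hα

theorem cascadeH_subset (hRS : IsRootSystem Rs) (hpos : IsPositiveSystem Rs pos) (β : V) :
    cascadeH Rs pos β ⊆ pos := by
  rintro α ⟨K, hK, hθ, hαK, hαβ⟩
  have hKirr := hK.isIrreducibleClosedSubsystem hRS
  refine (hpos.mem_or_neg_mem (hKirr.subset hαK)).resolve_right fun h => ?_
  have := hθ.inner_nonneg hRS hpos hKirr.subset (hKirr.neg_mem α hαK) h
  rw [inner_neg_left] at this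
  linarith

theorem pairwiseDisjoint_cascadeH (hRS : IsRootSystem Rs) (hpos : IsPositiveSystem Rs pos) :
    (cascadeSet Rs pos).PairwiseDisjoint (cascadeH Rs pos) := by
  rintro β₁ - β₂ - hne
  refine Set.disjoint_left.2 ?_
  rintro α ⟨K₁, hK₁, hθ₁, hα₁, hαβ₁⟩ ⟨K₂, hK₂, hθ₂, hα₂, hαβ₂⟩
  rcases hK₁.reflTransGen_total hRS hpos hK₂ ⟨α, hα₁, hα₂⟩ with h | h
  · rcases hθ₁.eq_or_forall_inner_eq_zero hRS hpos (hK₁.isIrreducibleClosedSubsystem hRS) hθ₂ h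
      with h' | h'
    exacts [hne h'.symm, hαβ₁.ne' (h' α hα₂)]
  · rcases hθ₂.eq_or_forall_inner_eq_zero hRS hpos (hK₂.isIrreducibleClosedSubsystem hRS) hθ₁ h
      with h' | h'
    exacts [hne h', hαβ₂.ne' (h' α hα₁)]

end Cascade

/-- The set of positive roots is the disjoint union of the
Heisenberg sets `H_β` over the elements `β` of the Kostant cascade. -/
theorem statement_0 (Rs pos : Set V) (hRS : IsRootSystem Rs)
    (hpos : IsPositiveSystem Rs pos) :
    pos = ⋃ β ∈ cascadeSet Rs pos, cascadeH Rs pos β ∧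
    (cascadeSet Rs pos).PairwiseDisjoint (cascadeH Rs pos) :=
  ⟨(pos_subset_biUnion_cascadeH hRS hpos).antisymm
      (Set.iUnion₂_subset fun β _ => cascadeH_subset hRS hpos β),
    pairwiseDisjoint_cascadeH hRS hpos⟩
end

section
/- If γ and δ are positive roots of a semisimple Lie algebra such that γ + δ = β where β belongs to the Kostant cascade β_π, then both γ and δ belong to H_β \ {β}, where H_β is the largest Heisenberg set with centre β contained in Δ⁺. -/
/- Kostant cascade machinery for a root system in a real inner product space. -/

open scoped RealInnerProductSpace

variable {V : Type*} [NormedAddCommGroup V] [InnerProductSpace ℝ V]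

section Aux

variable {Rs pos : Set V}

lemma root_ne_zero (hRS : IsRootSystem Rs) {a : V} (ha : a ∈ Rs) : a ≠ 0 :=
  fun h => hRS.ne_zero (h ▸ ha)

lemma inner_self_pos_of_ne_zero {a : V} (h : a ≠ 0) : (0:ℝ) < ⟪a, a⟫ := by
  rw [real_inner_self_eq_norm_mul_norm]
  have := norm_pos_iff.mpr h
  positivity

lemma root_inner_self_pos (hRS : IsRootSystem Rs) {a : V} (ha : a ∈ Rs) : 0 < ⟪a, a⟫ :=
  inner_self_pos_of_ne_zero (root_ne_zero hRS ha)

lemma strictCS (hRS : IsRootSystem Rs) {a b : V} (ha : a ∈ Rs) (hb : b ∈ Rs)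
    (h1 : a ≠ b) (h2 : a ≠ -b) : ⟪a, b⟫ ^ 2 < ⟪a, a⟫ * ⟪b, b⟫ := by
  have ha0 : a ≠ 0 := root_ne_zero hRS ha
  have hb0 : b ≠ 0 := root_ne_zero hRS hb
  have hbn : (0:ℝ) < ‖b‖ := norm_pos_iff.mpr hb0
  have han : (0:ℝ) < ‖a‖ := norm_pos_iff.mpr ha0
  have hub : ⟪a, b⟫ < ‖a‖ * ‖b‖ := by
    rw [inner_lt_norm_mul_iff_real]
    intro h
    have ha' : a = (‖b‖⁻¹ * ‖a‖) • b := by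
      rw [mul_smul, ← h, inv_smul_smul₀ (ne_of_gt hbn)]
    have ht := hRS.reduced b hb (‖b‖⁻¹ * ‖a‖) (ha' ▸ ha)
    have htpos : (0:ℝ) < ‖b‖⁻¹ * ‖a‖ := by positivity
    rcases ht with ht | ht
    · rw [ht, one_smul] at ha'; exact h1 ha'
    · rw [ht] at htpos; linarith
  have hlb : -(‖a‖ * ‖b‖) < ⟪a, b⟫ := by
    have : ⟪-a, b⟫ < ‖-a‖ * ‖b‖ := by
      rw [inner_lt_norm_mul_iff_real]
      intro h
      have ha' : -a = (‖b‖⁻¹ * ‖-a‖) • b := by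
        rw [mul_smul, ← h, inv_smul_smul₀ (ne_of_gt hbn)]
      have ht := hRS.reduced b hb (‖b‖⁻¹ * ‖-a‖) (ha' ▸ hRS.neg_mem a ha)
      have htpos : (0:ℝ) < ‖b‖⁻¹ * ‖-a‖ := by
        have : (0:ℝ) < ‖-a‖ := by rwa [norm_neg]
        positivity
      rcases ht with ht | ht
      · rw [ht, one_smul] at ha'
        exact h2 (by rw [← ha']; exact (neg_neg a).symm)
      · rw [ht] at htpos; linarith
    rw [inner_neg_left, norm_neg] at this
    linarith
  have hsq : ⟪a, b⟫ ^ 2 < (‖a‖ * ‖b‖) ^ 2 := sq_lt_sq' hlb hub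
  calc ⟪a, b⟫ ^ 2 < (‖a‖ * ‖b‖) ^ 2 := hsq
    _ = (‖a‖ * ‖a‖) * (‖b‖ * ‖b‖) := by ring
    _ = ⟪a, a⟫ * ⟪b, b⟫ := by
        rw [real_inner_self_eq_norm_mul_norm, real_inner_self_eq_norm_mul_norm]

/-- If two roots have negative inner product and are not opposite, their sum is a root. -/
lemma sum_mem_of_inner_neg (hRS : IsRootSystem Rs) {a b : V} (ha : a ∈ Rs) (hb : b ∈ Rs)
    (hib : ⟪a, b⟫ < 0) (hne : a + b ≠ 0) : a + b ∈ Rs := by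
  have haa := root_inner_self_pos hRS ha
  have hbb := root_inner_self_pos hRS hb
  have h1 : a ≠ b := by rintro rfl; linarith
  have h2 : a ≠ -b := by
    intro h; apply hne; rw [h]; exact neg_add_cancel b
  have hcs := strictCS hRS ha hb h1 h2
  obtain ⟨m, hm⟩ := hRS.crystallographic b hb a ha
  obtain ⟨k, hk⟩ := hRS.crystallographic a ha b hb
  have hmneg : (m:ℝ) < 0 := by
    rw [← hm]; exact div_neg_of_neg_of_pos (by linarith) hbb
  have hkneg : (k:ℝ) < 0 := by
    rw [← hk]
    have : ⟪b, a⟫ < 0 := by rwa [real_inner_comm]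
    exact div_neg_of_neg_of_pos (by linarith) haa
  have hprod : (m:ℝ) * (k:ℝ) < 4 := by
    rw [← hm, ← hk]
    rw [div_mul_div_comm]
    rw [div_lt_iff₀ (by positivity)]
    have hba : ⟪b, a⟫ = ⟪a, b⟫ := real_inner_comm a b
    nlinarith [hcs]
  have hm1 : m = -1 ∨ k = -1 := by
    have hm' : m < 0 := by exact_mod_cast hmneg
    have hk' : k < 0 := by exact_mod_cast hkneg
    have hp' : m * k < 4 := by exact_mod_cast hprod
    by_contra h
    push_neg at h
    obtain ⟨hm2, hk2⟩ := h
    have : m ≤ -2 := by omega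
    have : k ≤ -2 := by omega
    nlinarith
  rcases hm1 with h | h
  · have := hRS.reflect_mem b hb a ha
    rw [hm, h] at this
    simpa using this
  · have := hRS.reflect_mem a ha b hb
    rw [hk, h] at this
    rw [add_comm]
    simpa using this

lemma comp_subset {S C : Set V} (hC : IsComponent S C) : C ⊆ S := by
  obtain ⟨a, haS, rfl⟩ := hC
  intro b hb
  induction hb with
  | refl => exact haS
  | tail _ h _ => exact h.2.1

lemma comp_step {S C : Set V} (hC : IsComponent S C) {x y : V} (hx : x ∈ C) (hyS : y ∈ S)
    (hxy : ⟪x, y⟫ ≠ 0) : y ∈ C := by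
  have hxS : x ∈ S := comp_subset hC hx
  obtain ⟨a, haS, rfl⟩ := hC
  exact Relation.ReflTransGen.tail hx ⟨hxS, hyS, hxy⟩

lemma comp_add {S C : Set V} (hC : IsComponent S C) {x y : V}
    (hx0 : x ≠ 0) (hy0 : y ≠ 0) (hs0 : x + y ≠ 0) (hxS : x ∈ S) (hyS : y ∈ S)
    (hs : x + y ∈ C) : x ∈ C ∧ y ∈ C := by
  have hxx : (0:ℝ) < ⟪x, x⟫ := inner_self_pos_of_ne_zero hx0
  have hyy : (0:ℝ) < ⟪y, y⟫ := inner_self_pos_of_ne_zero hy0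
  have hss : (0:ℝ) < ⟪x + y, x + y⟫ := inner_self_pos_of_ne_zero hs0
  have hx_s : ⟪x + y, x⟫ = ⟪x, x⟫ + ⟪y, x⟫ := inner_add_left x y x
  have hy_s : ⟪x + y, y⟫ = ⟪x, y⟫ + ⟪y, y⟫ := inner_add_left x y y
  have hs_split : ⟪x + y, x + y⟫ = ⟪x + y, x⟫ + ⟪x + y, y⟫ := inner_add_right (x + y) x y
  have hxy_comm : ⟪y, x⟫ = ⟪x, y⟫ := real_inner_comm x y
  by_cases h1 : ⟪x + y, x⟫ = 0
  · have hyC : y ∈ C := by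
      apply comp_step hC hs hyS
      intro h; rw [h, h1] at hs_split; linarith
    have hxC : x ∈ C := by
      apply comp_step hC hyC hxS
      have hyx : ⟪y, x⟫ = -⟪x, x⟫ := by rw [hx_s] at h1; linarith
      intro h; rw [h] at hyx; linarith
    exact ⟨hxC, hyC⟩
  · have hxC : x ∈ C := comp_step hC hs hxS h1
    by_cases h2 : ⟪x + y, y⟫ = 0
    · have hyC : y ∈ C := by
        apply comp_step hC hxC hyS
        rw [hy_s] at h2
        intro h; rw [h] at h2; linarith
      exact ⟨hxC, hyC⟩
    · exact ⟨hxC, comp_step hC hs hyS h2⟩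

lemma cascadeSub_subset {K : Set V} (hK : CascadeSub Rs pos K) : K ⊆ Rs := by
  induction hK with
  | base C hC => exact comp_subset hC
  | step K C b hK hb hC ih =>
    exact (comp_subset hC).trans (fun a ha => ih ha.1)

/-- Key induction: cascade subsystems are closed under taking positive summands. -/
lemma mem_cascadeSub_of_add (hRS : IsRootSystem Rs) (hpos : IsPositiveSystem Rs pos)
    {K : Set V} (hK : CascadeSub Rs pos K) :
    ∀ x y : V, x ∈ pos → y ∈ pos → x + y ∈ K → x ∈ K ∧ y ∈ K := by
  induction hK with
  | base C hC =>
    intro x y hx hy hs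
    exact comp_add hC (root_ne_zero hRS (hpos.subset hx)) (root_ne_zero hRS (hpos.subset hy))
      (root_ne_zero hRS (comp_subset hC hs)) (hpos.subset hx) (hpos.subset hy) hs
  | step K C b hK hb hC ih =>
    intro x y hx hy hs
    have hsS : x + y ∈ {α ∈ K | ⟪α, b⟫ = 0} := comp_subset hC hs
    obtain ⟨hxK, hyK⟩ := ih x y hx hy hsS.1
    have hbpos : b ∈ pos := hb.2.1
    have hbR : b ∈ Rs := hpos.subset hbpos
    -- no element of K ∩ pos can have negative inner product with b
    have hnn : ∀ z : V, z ∈ K → z ∈ pos → ¬ ⟪z, b⟫ < 0 := by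
      intro z hzK hzp hneg
      have hzR : z ∈ Rs := hpos.subset hzp
      have hbz : ⟪b, z⟫ < 0 := by rw [real_inner_comm]; exact hneg
      have hne : b + z ≠ 0 := by
        intro h
        have hz : z = -b := by
          have : z = -b + (b + z) := by abel
          rw [h] at this; simpa using this
        have := (hpos.pos_iff b hbR).mp hbpos
        rw [← hz] at this
        exact this hzp
      exact hb.2.2 z hzK hzp (sum_mem_of_inner_neg hRS hbR hzR hbz hne)
    have hsum0 : ⟪x, b⟫ + ⟪y, b⟫ = 0 := by
      have := hsS.2
      rwa [inner_add_left] at this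
    have hx0 : ⟪x, b⟫ = 0 := by
      have h1 := hnn x hxK hx
      have h2 := hnn y hyK hy
      push_neg at h1 h2
      linarith
    have hy0 : ⟪y, b⟫ = 0 := by linarith
    exact comp_add hC (root_ne_zero hRS (hpos.subset hx)) (root_ne_zero hRS (hpos.subset hy))
      (root_ne_zero hRS (cascadeSub_subset hK hsS.1))
      ⟨hxK, hx0⟩ ⟨hyK, hy0⟩ hs

/-- If `β` is the highest root of a cascade subsystem `K`, `γ + δ = β` with `γ, δ`
positive and `δ ∈ K`, then `⟪δ, β⟫ > 0`. -/
lemma inner_pos_of_add_highest (hRS : IsRootSystem Rs) (hpos : IsPositiveSystem Rs pos)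
    {K : Set V} {β γ δ : V} (hK : CascadeSub Rs pos K) (hβh : IsHighestRoot Rs pos K β)
    (hγ : γ ∈ pos) (hδ : δ ∈ pos) (hsum : γ + δ = β) (hδK : δ ∈ K) : 0 < ⟪δ, β⟫ := by
  by_contra hle
  push_neg at hle
  have hβp : β ∈ pos := hβh.2.1
  have hβR : β ∈ Rs := hpos.subset hβp
  have hδR : δ ∈ Rs := hpos.subset hδ
  have hγR : γ ∈ Rs := hpos.subset hγ
  have hnot : β + δ ∉ Rs := hβh.2.2 δ hδK hδ
  have hne : β + δ ≠ 0 := by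
    intro h
    have hd : δ = -β := by
      have : δ = -β + (β + δ) := by abel
      rw [h] at this; simpa using this
    have := (hpos.pos_iff β hβR).mp hβp
    rw [← hd] at this
    exact this hδ
  rcases lt_or_eq_of_le hle with hlt | heq
  · exact hnot (sum_mem_of_inner_neg hRS hβR hδR (by rw [real_inner_comm]; exact hlt) hne)
  · -- the case ⟪δ, β⟫ = 0
    have hδβ : ⟪δ, β⟫ = 0 := heq
    have hββ : (0:ℝ) < ⟪β, β⟫ := root_inner_self_pos hRS hβR
    have hγγ : (0:ℝ) < ⟪γ, γ⟫ := root_inner_self_pos hRS hγR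
    have hδδpos : (0:ℝ) < ⟪δ, δ⟫ := root_inner_self_pos hRS hδR
    have hγβ : ⟪γ, β⟫ = ⟪β, β⟫ := by
      have : ⟪γ + δ, β⟫ = ⟪β, β⟫ := by rw [hsum]
      rw [inner_add_left, hδβ] at this; linarith
    have hγne : γ ≠ β := by
      intro h
      apply root_ne_zero hRS hδR
      have : γ + δ = γ + 0 := by rw [hsum, h, add_zero]
      exact add_left_cancel this
    have hγneg : γ ≠ -β := by
      intro h
      have h1 := (hpos.pos_iff γ hγR).mp hγ
      rw [h] at h1
      rw [neg_neg] at h1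
      exact h1 hβp
    have hcs := strictCS hRS hγR hβR hγne hγneg
    rw [hγβ] at hcs
    have hlt2 : ⟪β, β⟫ < ⟪γ, γ⟫ := by nlinarith
    obtain ⟨w, hw⟩ := hRS.crystallographic γ hγR β hβR
    have hβγ : ⟪β, γ⟫ = ⟪β, β⟫ := by rw [real_inner_comm]; exact hγβ
    rw [hβγ] at hw
    have hw0 : (0:ℝ) < (w:ℝ) := by
      rw [← hw]; positivity
    have hw2 : (w:ℝ) < 2 := by
      rw [← hw]
      rw [div_lt_iff₀ hγγ]
      nlinarith
    have hw1 : w = 1 := by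
      have h1 : (0:ℤ) < w := by exact_mod_cast hw0
      have h2 : w < 2 := by exact_mod_cast hw2
      omega
    rw [hw1] at hw
    push_cast at hw
    have hγγeq : ⟪γ, γ⟫ = 2 * ⟪β, β⟫ := by
      field_simp at hw
      linarith
    have hδeq : δ = β - γ := by rw [← hsum]; abel
    have hγδ : ⟪γ, δ⟫ = -⟪β, β⟫ := by
      rw [hδeq, inner_sub_right, hγβ, hγγeq]; ring
    have hδδ : ⟪δ, δ⟫ = ⟪β, β⟫ := by
      have hδγ : ⟪δ, γ⟫ = -⟪β, β⟫ := by rw [real_inner_comm]; exact hγδ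
      have : ⟪δ, δ⟫ = ⟪δ, β⟫ - ⟪δ, γ⟫ := by
        rw [← inner_sub_right, ← hδeq]
      rw [this, hδβ, hδγ]; ring
    have hrefl := hRS.reflect_mem δ hδR γ hγR
    have hcoef : 2 * ⟪γ, δ⟫ / ⟪δ, δ⟫ = -2 := by
      rw [hγδ, hδδ]; field_simp
    rw [hcoef] at hrefl
    have heq2 : γ - (-2:ℝ) • δ = β + δ := by
      rw [← hsum]; rw [neg_smul, sub_neg_eq_add, two_smul]; abel
    rw [heq2] at hrefl
    exact hnot hrefl

end Aux

/-- If `γ` and `δ` are positive roots with `γ + δ = β` an element of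
the Kostant cascade, then `γ` and `δ` both belong to `H_β \ {β}`. -/
theorem statement_1 (Rs pos : Set V) (hRS : IsRootSystem Rs)
    (hpos : IsPositiveSystem Rs pos) (γ δ β : V) (hγ : γ ∈ pos) (hδ : δ ∈ pos)
    (hβ : β ∈ cascadeSet Rs pos) (hsum : γ + δ = β) :
    γ ∈ cascadeH Rs pos β \ {β} ∧ δ ∈ cascadeH Rs pos β \ {β} := by
  obtain ⟨K, hK, hβh⟩ := hβ
  have hβK : β ∈ K := hβh.1
  obtain ⟨hγK, hδK⟩ := mem_cascadeSub_of_add hRS hpos hK γ δ hγ hδ (hsum ▸ hβK)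
  have hδi : 0 < ⟪δ, β⟫ := inner_pos_of_add_highest hRS hpos hK hβh hγ hδ hsum hδK
  have hγi : 0 < ⟪γ, β⟫ :=
    inner_pos_of_add_highest hRS hpos hK hβh hδ hγ (by rw [add_comm]; exact hsum) hγK
  have hγ0 : γ ≠ 0 := root_ne_zero hRS (hpos.subset hγ)
  have hδ0 : δ ≠ 0 := root_ne_zero hRS (hpos.subset hδ)
  have hγβ : γ ≠ β := by
    intro h
    apply hδ0
    have : γ + δ = γ + 0 := by rw [hsum, h, add_zero]
    exact add_left_cancel this
  have hδβ : δ ≠ β := by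
    intro h
    apply hγ0
    have : γ + δ = 0 + δ := by rw [hsum, h, zero_add]
    exact add_right_cancel this
  exact ⟨⟨⟨K, hK, hβh, hγK, hγi⟩, hγβ⟩, ⟨⟨K, hK, hβh, hδK, hδi⟩, hδβ⟩⟩
end

section
/- Let s be a positive integer, and let β'_i = ε_i − ε_{s+1−i} ∈ ℝ^s for 1 ≤ i ≤ ⌊(s−1)/2⌋ be the non-simple elements of the Kostant cascade of A_{s-1}. Define coroot evaluations via α^∨ for α = ε_j − ε_{j+1} (so β(α^∨) = (β, ε_j − ε_{j+1}) for the standard inner product). Order the coroots h'_j as h'_{2j-1} = α^∨_{2j-1}, h'_{2j} = α^∨_{s-2j} (for j up to ⌊(s+1)/4⌋ or ⌊s/4⌋, without repetitions, as appropriate to get ⌊(s−1)/2⌋ elements). Then the square matrix A of size ⌊(s−1)/2⌋ with entries A_{ij} = −β'_i(h'_j) is lower triangular with −1 on the diagonal; in particular det A = (−1)^{⌊(s−1)/2⌋}. -/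
open scoped RealInnerProductSpace

/-- 1-based orthonormal basis vectors `ε_k` of `ℝ^s` (zero out of range). -/
noncomputable def eps (s k : ℕ) : EuclideanSpace ℝ (Fin s) :=
  if h : 1 ≤ k ∧ k ≤ s then EuclideanSpace.single ⟨k - 1, by omega⟩ (1 : ℝ) else 0

/-- The non-simple elements `β'_i = ε_i - ε_{s+1-i}` of the Kostant cascade of
`A_{s-1}`. -/
noncomputable def cascadeRoot (s i : ℕ) : EuclideanSpace ℝ (Fin s) :=
  eps s i - eps s (s + 1 - i)

/-- The ordered coroots `h'_k` : `h'_{2j-1} = α^∨_{2j-1}` and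
`h'_{2j} = α^∨_{s-2j}`, where `α^∨_m = ε_m - ε_{m+1}` (all roots of `A_{s-1}`
have squared length `2`, so pairing against `α^∨_m` is the inner product with
`ε_m - ε_{m+1}`). -/
noncomputable def corootA (s k : ℕ) : EuclideanSpace ℝ (Fin s) :=
  if k % 2 = 1 then eps s k - eps s (k + 1) else eps s (s - k) - eps s (s - k + 1)

lemma inner_eps_eps (s a b : ℕ) :
    ⟪eps s a, eps s b⟫ = if a = b ∧ 1 ≤ a ∧ a ≤ s then 1 else 0 := by
  unfold eps
  by_cases ha : 1 ≤ a ∧ a ≤ s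
  · by_cases hb : 1 ≤ b ∧ b ≤ s
    · rw [dif_pos ha, dif_pos hb, EuclideanSpace.inner_single_left,
        PiLp.single_apply]
      simp only [map_one, one_mul, Fin.mk.injEq]
      split_ifs <;> first | rfl | omega
    · rw [dif_pos ha, dif_neg hb, inner_zero_right, if_neg (by omega)]
  · rw [dif_neg ha, inner_zero_left, if_neg (by tauto)]

/-- For odd `j` only the `ε_i` half of `β'_i` meets `h'_j`, for even `j` only the mirrored
half `ε_{s+1-i}`; either way the pairing is `δ_{i,j} - δ_{i,j+1}`. -/
lemma inner_cascadeRoot_corootA (s i j : ℕ) (hi : 2 * i < s) (hj₀ : 1 ≤ j) (hj : 2 * j < s) :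
    ⟪cascadeRoot s i, corootA s j⟫ = (if i = j then 1 else 0) - (if i = j + 1 then 1 else 0) := by
  unfold cascadeRoot corootA
  by_cases hj₂ : j % 2 = 1 <;>
    simp only [hj₂, if_true, if_false, inner_sub_left, inner_sub_right, inner_eps_eps] <;>
    split_ifs <;> first | ring1 | (exfalso; omega)

theorem statement_4_general (s : ℕ)
    (A : Matrix (Fin ((s - 1) / 2)) (Fin ((s - 1) / 2)) ℝ)
    (hA : ∀ (i j : Fin ((s - 1) / 2)), A i j = -⟪cascadeRoot s ((i : ℕ) + 1), corootA s ((j : ℕ) + 1)⟫) :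
    (∀ (i j : Fin ((s - 1) / 2)), (i : ℕ) < (j : ℕ) → A i j = 0) ∧ (∀ i, A i i = -1) ∧
    A.det = (-1 : ℝ) ^ ((s - 1) / 2) := by
  have hentry (i j : Fin ((s - 1) / 2)) :
      A i j = (if (i : ℕ) = j + 1 then 1 else 0) - (if i = j then 1 else 0) := by
    rw [hA, inner_cascadeRoot_corootA s _ _ (by omega) (by omega) (by omega)]
    simp only [Nat.add_right_cancel_iff, Fin.val_inj]
    ring
  have hlower : ∀ i j : Fin ((s - 1) / 2), (i : ℕ) < j → A i j = 0 := fun i j hij => by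
    rw [hentry, if_neg (by omega), if_neg (by omega), sub_zero]
  have hdiag : ∀ i, A i i = -1 := fun i => by
    rw [hentry, if_neg (by omega), if_pos rfl, zero_sub]
  refine ⟨hlower, hdiag, ?_⟩
  rw [Matrix.det_of_isLowerTriangular A hlower]
  simp [hdiag]

/-- The matrix `A` of size `⌊(s-1)/2⌋` with entries
`A_{ij} = -β'_i(h'_j)` is lower triangular with `-1` on the diagonal; in
particular `det A = (-1)^{⌊(s-1)/2⌋}`. -/
theorem statement_4 (s : ℕ) (hs : 1 ≤ s)
    (A : Matrix (Fin ((s - 1) / 2)) (Fin ((s - 1) / 2)) ℝ)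
    (hA : ∀ (i j : Fin ((s - 1) / 2)), A i j = -⟪cascadeRoot s ((i : ℕ) + 1), corootA s ((j : ℕ) + 1)⟫) :
    (∀ (i j : Fin ((s - 1) / 2)), (i : ℕ) < (j : ℕ) → A i j = 0) ∧ (∀ i, A i i = -1) ∧
    A.det = (-1 : ℝ) ^ ((s - 1) / 2) :=
  statement_4_general s A hA
end

section
/- Let g be simple of type B_n (n ≥ 2), π = {α_1,…,α_n} its simple roots, s an odd integer and ℓ ≥ 1 with s + 2ℓ ≤ n, and π' = π \ {α_s, α_{s+2}, …, α_{s+2ℓ}}. Define involutions i, j of π with j = −w_0 = Id and i determined by π' as in the theory of parabolic subalgebras (i(α) = −w'_0(α) on π', and the induced rule on π\π'). Then the number of ⟨ij⟩-orbits in π equals n − (s−1)/2; explicitly the orbits are {α_u, α_{s−u}} for 1 ≤ u ≤ (s−1)/2 and singletons {α_v} for s ≤ v ≤ n. -/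
/-- The orbit of `a` under the map `f` (as the equivalence class of the
equivalence relation generated by `x ∼ f x`). -/
def orbit (f : ℕ → ℕ) (a : ℕ) : Set ℕ :=
  {b | Relation.EqvGen (fun x y => y = f x) a b}

/-- The set of orbits of `f` on the (1-based) index set `{1, …, n}`. -/
def orbitsOn (f : ℕ → ℕ) (n : ℕ) : Set (Set ℕ) :=
  {C | ∃ a, 1 ≤ a ∧ a ≤ n ∧ C = orbit f a}

/-- The composite involution `i ∘ j` on the (indices of the) simple roots of `B_n`
with `π' = π \ {α_s, α_{s+2}, …, α_{s+2ℓ}}` : `j = -w₀ = Id`, and `i` exchanges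
`α_u` and `α_{s-u}` on the component `A_{s-1}` of `π'` and is the identity
elsewhere. -/
def ijB (s u : ℕ) : ℕ := if 1 ≤ u ∧ u ≤ s - 1 then s - u else u

lemma eqvGen_inv {f : ℕ → ℕ} (hf : ∀ x, f (f x) = x) {x y : ℕ}
    (h : Relation.EqvGen (fun x y => y = f x) x y) : y = x ∨ y = f x := by
  induction h with
  | rel a b hab => exact Or.inr hab
  | refl a => exact Or.inl rfl
  | symm a b _ ih =>
      rcases ih with h | h
      · exact Or.inl h.symm
      · right; rw [h, hf]
  | trans a b c _ _ ih1 ih2 =>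
      rcases ih1 with h1 | h1 <;> rcases ih2 with h2 | h2 <;> subst h2 <;> subst h1 <;>
        simp [hf]

lemma orbit_eq {f : ℕ → ℕ} (hf : ∀ x, f (f x) = x) (a : ℕ) :
    orbit f a = {a, f a} := by
  ext b
  simp only [orbit, Set.mem_setOf_eq, Set.mem_insert_iff, Set.mem_singleton_iff]
  constructor
  · exact eqvGen_inv hf
  · rintro (rfl | rfl)
    · exact Relation.EqvGen.refl _
    · exact Relation.EqvGen.rel _ _ rfl

lemma ijB_invol (s : ℕ) : ∀ u, ijB s (ijB s u) = u := by
  intro u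
  unfold ijB
  split_ifs <;> omega

/-- For `g` of type `B_n`, `s` odd, `ℓ ≥ 1`, `s + 2ℓ ≤ n`, the
`⟨ij⟩`-orbits in `π` are `{α_u, α_{s-u}}` for `1 ≤ u ≤ (s-1)/2` and the
singletons `{α_v}` for `s ≤ v ≤ n`; their number is `n - (s-1)/2`. -/
theorem statement_8 (n s ℓ : ℕ) (hn : 2 ≤ n) (hs : Odd s) (hl : 1 ≤ ℓ)
    (hsl : s + 2 * ℓ ≤ n) :
    orbitsOn (ijB s) n
      = {C | ∃ u, 1 ≤ u ∧ u ≤ (s - 1) / 2 ∧ C = ({u, s - u} : Set ℕ)}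
        ∪ {C | ∃ v, s ≤ v ∧ v ≤ n ∧ C = ({v} : Set ℕ)} ∧
    (orbitsOn (ijB s) n).ncard = n - (s - 1) / 2 := by
  obtain ⟨m, hm⟩ := hs
  have hsn : s ≤ n := by omega
  have hm2 : (s - 1) / 2 = m := by omega
  have key : orbitsOn (ijB s) n
      = {C | ∃ u, 1 ≤ u ∧ u ≤ (s - 1) / 2 ∧ C = ({u, s - u} : Set ℕ)}
        ∪ {C | ∃ v, s ≤ v ∧ v ≤ n ∧ C = ({v} : Set ℕ)} := by
    ext C
    simp only [orbitsOn, Set.mem_setOf_eq, Set.mem_union, hm2]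
    constructor
    · rintro ⟨a, ha1, ha2, rfl⟩
      rw [orbit_eq (ijB_invol s)]
      by_cases h : 1 ≤ a ∧ a ≤ s - 1
      · have hija : ijB s a = s - a := by unfold ijB; rw [if_pos h]
        rw [hija]
        by_cases ham : a ≤ m
        · exact Or.inl ⟨a, ha1, ham, rfl⟩
        · refine Or.inl ⟨s - a, by omega, by omega, ?_⟩
          have h2 : s - (s - a) = a := by omega
          rw [h2, Set.pair_comm]
      · have hija : ijB s a = a := by unfold ijB; rw [if_neg h]
        rw [hija]
        exact Or.inr ⟨a, by omega, ha2, by simp⟩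
    · rintro (⟨u, hu1, hu2, rfl⟩ | ⟨v, hv1, hv2, rfl⟩)
      · refine ⟨u, hu1, by omega, ?_⟩
        rw [orbit_eq (ijB_invol s)]
        have h : ijB s u = s - u := by unfold ijB; rw [if_pos (by omega)]
        rw [h]
      · refine ⟨v, by omega, hv2, ?_⟩
        rw [orbit_eq (ijB_invol s)]
        have h : ijB s v = v := by unfold ijB; rw [if_neg (by omega)]
        rw [h]
        simp
  refine ⟨key, ?_⟩
  rw [key]
  have hA : {C | ∃ u, 1 ≤ u ∧ u ≤ (s - 1) / 2 ∧ C = ({u, s - u} : Set ℕ)}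
      = (fun u => ({u, s - u} : Set ℕ)) '' Set.Icc 1 ((s - 1) / 2) := by
    ext C
    constructor
    · rintro ⟨u, h1, h2, rfl⟩
      exact ⟨u, Set.mem_Icc.mpr ⟨h1, h2⟩, rfl⟩
    · rintro ⟨u, hu, rfl⟩
      rw [Set.mem_Icc] at hu
      exact ⟨u, hu.1, hu.2, rfl⟩
  have hB : {C | ∃ v, s ≤ v ∧ v ≤ n ∧ C = ({v} : Set ℕ)}
      = (fun v => ({v} : Set ℕ)) '' Set.Icc s n := by
    ext C
    constructor
    · rintro ⟨v, h1, h2, rfl⟩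
      exact ⟨v, Set.mem_Icc.mpr ⟨h1, h2⟩, rfl⟩
    · rintro ⟨v, hv, rfl⟩
      rw [Set.mem_Icc] at hv
      exact ⟨v, hv.1, hv.2, rfl⟩
  have hiA : Set.InjOn (fun u => ({u, s - u} : Set ℕ)) (Set.Icc 1 ((s - 1) / 2)) := by
    intro u hu v hv h
    simp only [Set.mem_Icc] at hu hv
    dsimp only at h
    have h1 : u ∈ ({v, s - v} : Set ℕ) := by rw [← h]; simp
    simp only [Set.mem_insert_iff, Set.mem_singleton_iff] at h1
    omega
  have hiB : Set.InjOn (fun v => ({v} : Set ℕ)) (Set.Icc s n) := by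
    intro u _ v _ h
    simpa using h
  have hdisj : Disjoint ((fun u => ({u, s - u} : Set ℕ)) '' Set.Icc 1 ((s - 1) / 2))
      ((fun v => ({v} : Set ℕ)) '' Set.Icc s n) := by
    rw [Set.disjoint_left]
    rintro C ⟨u, hu, rfl⟩ ⟨v, hv, hC⟩
    simp only [Set.mem_Icc] at hu hv
    dsimp only at hC
    have h1 : u ∈ ({v} : Set ℕ) := by rw [hC]; simp
    simp only [Set.mem_singleton_iff] at h1
    omega
  rw [hA, hB,
    Set.ncard_union_eq hdisj ((Set.finite_Icc _ _).image _) ((Set.finite_Icc _ _).image _),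
    Set.ncard_image_of_injOn hiA, Set.ncard_image_of_injOn hiB,
    ← Finset.coe_Icc, ← Finset.coe_Icc, Set.ncard_coe_finset, Set.ncard_coe_finset,
    Nat.card_Icc, Nat.card_Icc]
  omega
end

section
/- Let n ≥ 5 be odd and π' = π \ {α_{n-1}, α_n} in type D_n. Then the ⟨ij⟩-orbits in π are {α_u, α_{n−1−u}} for 1 ≤ u ≤ (n−3)/2, {α_{(n−1)/2}}, {α_{n-1}}, and {α_n}; hence there are exactly (n+3)/2 orbits. -/
/-- The composite map `i ∘ j` on the indices of the simple roots of `D_n` (`n`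
odd) with `π' = π \ {α_{n-1}, α_n}` : on the component `A_{n-2} = π'` it sends
`α_u` to `α_{n-1-u}`, and it fixes `α_{n-1}` and `α_n` (since `i` and `j` both
exchange them). -/
def ijD0 (n a : ℕ) : ℕ := if 1 ≤ a ∧ a ≤ n - 2 then n - 1 - a else a

lemma eqvgen_of_invol (f : ℕ → ℕ) (hf : ∀ x, f (f x) = x) :
    ∀ x y, Relation.EqvGen (fun x y => y = f x) x y → y = x ∨ y = f x := by
  intro x y h
  induction h with
  | rel a b hab => right; exact hab
  | refl a => left; rfl
  | symm a b _ ih =>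
      rcases ih with h | h
      · left; omega
      · right; rw [h, hf]
  | trans a b c _ _ ih1 ih2 =>
      rcases ih1 with h1 | h1 <;> rcases ih2 with h2 | h2
      · left; rw [h2, h1]
      · right; rw [h2, h1]
      · right; rw [h2, h1]
      · left; rw [h2, h1, hf]

lemma orbit_pair (f : ℕ → ℕ) (hf : ∀ x, f (f x) = x) (a : ℕ) :
    orbit f a = {a, f a} := by
  ext b
  constructor
  · intro hb
    rcases eqvgen_of_invol f hf a b hb with h | h
    · left; exact h
    · right; exact h
  · rintro (rfl | rfl)
    · exact Relation.EqvGen.refl _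
    · exact Relation.EqvGen.rel _ _ rfl

lemma ijD0_invol (n : ℕ) (hn : 5 ≤ n) : ∀ x, ijD0 n (ijD0 n x) = x := by
  intro x
  simp only [ijD0]
  split_ifs <;> omega

theorem statement_12 (n : ℕ) (hn : 5 ≤ n) (hnodd : Odd n) :
    orbitsOn (ijD0 n) n
      = {C | ∃ u, 1 ≤ u ∧ u ≤ (n - 3) / 2 ∧ C = ({u, n - 1 - u} : Set ℕ)}
        ∪ {({(n - 1) / 2} : Set ℕ), ({n - 1} : Set ℕ), ({n} : Set ℕ)} ∧
    (orbitsOn (ijD0 n) n).ncard = (n + 3) / 2 := by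
  obtain ⟨m, rfl⟩ := hnodd
  have hm : 2 ≤ m := by omega
  set n := 2 * m + 1 with hn'
  have hfix : ∀ a, ¬ (1 ≤ a ∧ a ≤ n - 2) → ijD0 n a = a := by
    intro a ha; simp only [ijD0, if_neg ha]
  have hmov : ∀ a, (1 ≤ a ∧ a ≤ n - 2) → ijD0 n a = 2 * m - a := by
    intro a ha; simp only [ijD0, if_pos ha]; omega
  have hinv := ijD0_invol n hn
  have horb : ∀ a, orbit (ijD0 n) a = {a, ijD0 n a} := orbit_pair _ hinv
  have hmain : orbitsOn (ijD0 n) n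
      = {C | ∃ u, 1 ≤ u ∧ u ≤ (n - 3) / 2 ∧ C = ({u, n - 1 - u} : Set ℕ)}
        ∪ {({(n - 1) / 2} : Set ℕ), ({n - 1} : Set ℕ), ({n} : Set ℕ)} := by
    ext C
    constructor
    · rintro ⟨a, ha1, ha2, rfl⟩
      rw [horb]
      by_cases hc : 1 ≤ a ∧ a ≤ n - 2
      · rw [hmov a hc]
        rcases lt_trichotomy a m with h | heq | h
        · left
          exact ⟨a, ha1, by omega, by rw [show n - 1 - a = 2 * m - a by omega]⟩
        · right; left
          rw [heq, show (n - 1) / 2 = m by omega, show 2 * m - m = m by omega,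
            Set.pair_eq_singleton]
        · left
          refine ⟨2 * m - a, by omega, by omega, ?_⟩
          rw [show n - 1 - (2 * m - a) = a by omega]
          ext x
          simp only [Set.mem_insert_iff, Set.mem_singleton_iff]
          omega
      · rw [hfix a hc, Set.pair_eq_singleton]
        right
        have : a = n - 1 ∨ a = n := by omega
        rcases this with rfl | rfl
        · right; left; rfl
        · right; right; rfl
    · rintro (⟨u, hu1, hu2, rfl⟩ | hC)
      · refine ⟨u, hu1, by omega, ?_⟩
        rw [horb, hmov u ⟨hu1, by omega⟩, show n - 1 - u = 2 * m - u by omega]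
      · simp only [Set.mem_insert_iff, Set.mem_singleton_iff] at hC
        rcases hC with rfl | rfl | rfl
        · refine ⟨(n - 1) / 2, by omega, by omega, ?_⟩
          rw [horb, hmov _ ⟨by omega, by omega⟩,
            show 2 * m - (n - 1) / 2 = (n - 1) / 2 by omega, Set.pair_eq_singleton]
        · refine ⟨n - 1, by omega, by omega, ?_⟩
          rw [horb, hfix _ (by omega), Set.pair_eq_singleton]
        · refine ⟨n, by omega, by omega, ?_⟩
          rw [horb, hfix _ (by omega), Set.pair_eq_singleton]
  refine ⟨hmain, ?_⟩
  rw [hmain]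
  have hA : {C | ∃ u, 1 ≤ u ∧ u ≤ (n - 3) / 2 ∧ C = ({u, n - 1 - u} : Set ℕ)}
      = (fun u => ({u, 2 * m - u} : Set ℕ)) '' Set.Icc 1 (m - 1) := by
    ext C
    simp only [Set.mem_image, Set.mem_Icc, Set.mem_setOf_eq]
    constructor
    · rintro ⟨u, hu1, hu2, rfl⟩
      exact ⟨u, ⟨hu1, by omega⟩, by rw [show n - 1 - u = 2 * m - u by omega]⟩
    · rintro ⟨u, ⟨hu1, hu2⟩, rfl⟩
      exact ⟨u, hu1, by omega, by rw [show n - 1 - u = 2 * m - u by omega]⟩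
  rw [hA]
  have hinj : Set.InjOn (fun u => ({u, 2 * m - u} : Set ℕ)) (Set.Icc 1 (m - 1)) := by
    intro u hu v hv h
    simp only [Set.mem_Icc] at hu hv
    simp only [Set.ext_iff, Set.mem_insert_iff, Set.mem_singleton_iff] at h
    have h1 := h u
    omega
  have hAfin : ((fun u => ({u, 2 * m - u} : Set ℕ)) '' Set.Icc 1 (m - 1)).Finite :=
    (Set.finite_Icc 1 (m - 1)).image _
  have hBfin : ({({(n - 1) / 2} : Set ℕ), ({n - 1} : Set ℕ), ({n} : Set ℕ)} :
      Set (Set ℕ)).Finite := Set.toFinite _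
  have hdisj : Disjoint ((fun u => ({u, 2 * m - u} : Set ℕ)) '' Set.Icc 1 (m - 1))
      ({({(n - 1) / 2} : Set ℕ), ({n - 1} : Set ℕ), ({n} : Set ℕ)} : Set (Set ℕ)) := by
    rw [Set.disjoint_left]
    rintro C ⟨u, hu, rfl⟩ hC
    simp only [Set.mem_Icc] at hu
    simp only [Set.mem_insert_iff, Set.mem_singleton_iff] at hC
    have h2 : 2 * m - u ∈ ({u, 2 * m - u} : Set ℕ) := by right; rfl
    have h1 : u ∈ ({u, 2 * m - u} : Set ℕ) := by left; rfl
    rcases hC with h | h | h <;> rw [h] at h1 h2 <;>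
      simp only [Set.mem_singleton_iff] at h1 h2 <;> omega
  rw [Set.ncard_union_eq hdisj hAfin hBfin, Set.ncard_image_of_injOn hinj]
  have hIcc : (Set.Icc 1 (m - 1)).ncard = m - 1 := by
    rw [← Finset.coe_Icc, Set.ncard_coe_finset, Nat.card_Icc]
    omega
  have hne1 : ({(n - 1) / 2} : Set ℕ) ≠ ({n - 1} : Set ℕ) := by
    intro h
    have := Set.singleton_eq_singleton_iff.mp h
    omega
  have hne2 : ({(n - 1) / 2} : Set ℕ) ≠ ({n} : Set ℕ) := by
    intro h
    have := Set.singleton_eq_singleton_iff.mp h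
    omega
  have hne3 : ({n - 1} : Set ℕ) ≠ ({n} : Set ℕ) := by
    intro h
    have := Set.singleton_eq_singleton_iff.mp h
    omega
  have hB : ({({(n - 1) / 2} : Set ℕ), ({n - 1} : Set ℕ), ({n} : Set ℕ)} :
      Set (Set ℕ)).ncard = 3 := by
    have hm1 : ({(n - 1) / 2} : Set ℕ) ∉ ({({n - 1} : Set ℕ), ({n} : Set ℕ)} : Set (Set ℕ)) := by
      simp only [Set.mem_insert_iff, Set.mem_singleton_iff]
      push_neg
      exact ⟨hne1, hne2⟩
    have hm2 : ({n - 1} : Set ℕ) ∉ ({({n} : Set ℕ)} : Set (Set ℕ)) := by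
      simpa using hne3
    rw [Set.ncard_insert_of_notMem hm1, Set.ncard_insert_of_notMem hm2,
      Set.ncard_singleton]
  rw [hIcc, hB]
  omega
end

section
/- Let n ≥ 4 be even, 0 ≤ ℓ ≤ (n−2)/2 and π' = π \ {α_{n−1−2k}, α_n : 0 ≤ k ≤ ℓ} in type D_n. Then the ⟨ij⟩-orbits in π are {α_u, α_{n−1−2ℓ−u}} for 1 ≤ u ≤ (n−2−2ℓ)/2 and singletons {α_v} for n−1−2ℓ ≤ v ≤ n; in particular their number is (n + 2 + 2ℓ)/2. -/
/-- The composite map `i ∘ j = i` on the indices of the simple roots of `D_n`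
(`n` even, so `j = Id`) with `π' = π \ {α_{n-1-2k}, α_n : 0 ≤ k ≤ ℓ}` : on the
component `A_{n-2-2ℓ}` it exchanges `α_u` and `α_{n-1-2ℓ-u}`, and it is the
identity elsewhere. -/
def ijDev (n ℓ a : ℕ) : ℕ := if 1 ≤ a ∧ a ≤ n - 2 - 2 * ℓ then n - 1 - 2 * ℓ - a else a

lemma orbit_eq_pair_of_involutive {f : ℕ → ℕ} (hf : Function.Involutive f) (a : ℕ) :
    orbit f a = {a, f a} := by
  have hequiv : Equivalence (fun x y : ℕ => y = x ∨ y = f x) := by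
    refine ⟨fun _ => .inl rfl, ?_, ?_⟩
    · rintro x y (rfl | rfl)
      exacts [.inl rfl, .inr (hf x).symm]
    · rintro x y z (rfl | rfl) (rfl | rfl)
      exacts [.inl rfl, .inr rfl, .inr rfl, .inl (hf x)]
  ext b
  constructor
  · intro hb
    exact hequiv.eqvGen_iff.mp (hb.mono fun _ _ h => .inr h)
  · rintro (rfl | rfl)
    exacts [.refl _, .rel _ _ rfl]

lemma orbitsOn_eq_of_involutive {f : ℕ → ℕ} (hf : Function.Involutive f) (n : ℕ) :
    orbitsOn f n = {C | ∃ a, 1 ≤ a ∧ a ≤ n ∧ C = {a, f a}} := by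
  simp only [orbitsOn, orbit_eq_pair_of_involutive hf]

lemma setOf_exists_Icc_eq_image {α : Type*} (g : ℕ → α) (a b : ℕ) :
    {C | ∃ u, a ≤ u ∧ u ≤ b ∧ C = g u} = g '' Set.Icc a b := by
  ext C
  simp only [Set.mem_ofPred_eq, Set.mem_image, Set.mem_Icc, and_assoc, eq_comm]

section ijDev

variable {n ℓ : ℕ}

lemma ijDev_involutive : Function.Involutive (ijDev n ℓ) := by
  intro a
  unfold ijDev
  split_ifs <;> omega

lemma ijDev_of_le {a : ℕ} (ha : 1 ≤ a) (ha' : a ≤ n - 2 - 2 * ℓ) :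
    ijDev n ℓ a = n - 1 - 2 * ℓ - a :=
  if_pos ⟨ha, ha'⟩

lemma ijDev_of_lt {a : ℕ} (ha : n - 2 - 2 * ℓ < a) : ijDev n ℓ a = a :=
  if_neg (by omega)

lemma orbitsOn_ijDev (hn : Even n) (hl : 2 * ℓ + 2 ≤ n) :
    orbitsOn (ijDev n ℓ) n
      = {C | ∃ u, 1 ≤ u ∧ u ≤ (n - 2 - 2 * ℓ) / 2 ∧
            C = ({u, n - 1 - 2 * ℓ - u} : Set ℕ)}
        ∪ {C | ∃ v, n - 1 - 2 * ℓ ≤ v ∧ v ≤ n ∧ C = ({v} : Set ℕ)} := by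
  obtain ⟨k, hk⟩ := hn
  rw [orbitsOn_eq_of_involutive ijDev_involutive]
  ext C
  simp only [Set.mem_union]
  constructor
  · rintro ⟨a, ha, ha', rfl⟩
    rcases le_or_gt a (n - 2 - 2 * ℓ) with hA | hA
    · rw [ijDev_of_le ha hA]
      rcases le_or_gt a ((n - 2 - 2 * ℓ) / 2) with hlow | hhigh
      · exact .inl ⟨a, ha, hlow, rfl⟩
      -- `n` is even, so the swap has no fixed point and the partner of `a` lies in the lower half.
      · refine .inl ⟨n - 1 - 2 * ℓ - a, by omega, by omega, ?_⟩
        rw [Set.pair_comm, Nat.sub_sub_self (by omega)]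
    · rw [ijDev_of_lt hA, Set.pair_eq_singleton]
      exact .inr ⟨a, by omega, ha', rfl⟩
  · rintro (⟨u, hu, hu', rfl⟩ | ⟨v, hv, hv', rfl⟩)
    · exact ⟨u, hu, by omega, by rw [ijDev_of_le hu (by omega)]⟩
    · exact ⟨v, by omega, hv', by rw [ijDev_of_lt (by omega), Set.pair_eq_singleton]⟩

end ijDev

lemma ncard_image_pairs {c k : ℕ} (hk : 2 * k < c) :
    ((fun u => ({u, c - u} : Set ℕ)) '' Set.Icc 1 k).ncard = k := by
  have hinj : Set.InjOn (fun u => ({u, c - u} : Set ℕ)) (Set.Icc 1 k) := by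
    intro u hu u' hu' h
    have h : ({u, c - u} : Set ℕ) = {u', c - u'} := h
    have hmem : u ∈ ({u', c - u'} : Set ℕ) := h ▸ Set.mem_insert u _
    simp only [Set.mem_Icc, Set.mem_insert_iff, Set.mem_singleton_iff] at hu hu' hmem
    omega
  rw [hinj.ncard_image, Set.ncard_Icc_nat, Nat.add_sub_cancel]

lemma disjoint_image_pairs_image_singleton {c k : ℕ} (hk : 2 * k < c) (s : Set ℕ) :
    Disjoint ((fun u => ({u, c - u} : Set ℕ)) '' Set.Icc 1 k) ((fun v => ({v} : Set ℕ)) '' s) := by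
  rw [Set.disjoint_left]
  rintro C ⟨u, ⟨-, hu⟩, rfl⟩ ⟨v, -, hv⟩
  have hv : ({v} : Set ℕ) = {u, c - u} := hv
  have h₁ : u ∈ ({v} : Set ℕ) := hv ▸ Set.mem_insert u _
  have h₂ : c - u ∈ ({v} : Set ℕ) := hv ▸ Set.mem_insert_of_mem u rfl
  rw [Set.mem_singleton_iff] at h₁ h₂
  omega

/-- For `D_n`, `n ≥ 4` even, `0 ≤ ℓ ≤ (n-2)/2`,
`π' = π \ {α_{n-1-2k}, α_n : 0 ≤ k ≤ ℓ}`, the `⟨ij⟩`-orbits in `π` are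
`{α_u, α_{n-1-2ℓ-u}}` for `1 ≤ u ≤ (n-2-2ℓ)/2` and the singletons `{α_v}` for
`n-1-2ℓ ≤ v ≤ n`; in particular their number is `(n+2+2ℓ)/2`. -/
theorem statement_16 (n ℓ : ℕ) (hn : 4 ≤ n) (hneven : Even n)
    (hl : 2 * ℓ ≤ n - 2) :
    orbitsOn (ijDev n ℓ) n
      = {C | ∃ u, 1 ≤ u ∧ u ≤ (n - 2 - 2 * ℓ) / 2 ∧
            C = ({u, n - 1 - 2 * ℓ - u} : Set ℕ)}
        ∪ {C | ∃ v, n - 1 - 2 * ℓ ≤ v ∧ v ≤ n ∧ C = ({v} : Set ℕ)} ∧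
    (orbitsOn (ijDev n ℓ) n).ncard = (n + 2 + 2 * ℓ) / 2 := by
  have hsplit := orbitsOn_ijDev hneven (show 2 * ℓ + 2 ≤ n by omega)
  have hhalf : 2 * ((n - 2 - 2 * ℓ) / 2) < n - 1 - 2 * ℓ := by omega
  refine ⟨hsplit, ?_⟩
  rw [hsplit, setOf_exists_Icc_eq_image, setOf_exists_Icc_eq_image,
    Set.ncard_union_eq (disjoint_image_pairs_image_singleton hhalf _)
      ((Set.finite_Icc _ _).image _) ((Set.finite_Icc _ _).image _),
    ncard_image_pairs hhalf, Set.singleton_injective.injOn.ncard_image, Set.ncard_Icc_nat]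
  obtain ⟨k, rfl⟩ := hneven
  omega
end
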